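/- For any unit vector v ∈ D2, the operator P_v satisfies P_v v = (1/2)λ1η·v (so v is an eigenvector with eigenvalue σ = (1/2)λ1η), and every eigenvalue of P_v restricted to the orthogonal complement of v in D2 equals either 0 or τ = (1/4)η(η + λ1/2). -/

import Mathlib

open scoped RealInnerProductSpace
open Module Submodule

noncomputable section

variable {V : Type*} [NormedAddCommGroup V] [InnerProductSpace ℝ V]

/-- The curvature-type operator built from `ε` and the difference tensor `K`:
`R(X,Y)Z = ε(⟨Y,Z⟩X − ⟨X,Z⟩Y) − K(X,K(Y,Z)) + K(Y,K(X,Z))`. -/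
def Rc (ε : ℝ) (K : V →ₗ[ℝ] V →ₗ[ℝ] V) (X Y Z : V) : V :=
  ε • (⟪Y, Z⟫ • X - ⟪X, Z⟫ • Y) - K X (K Y Z) + K Y (K X Z)

/-- The bilinear map `L(v₁,v₂) = K(v₁,v₂) − (λ₁/2)⟨v₁,v₂⟩ e₁`. -/
def Lop (lam1 : ℝ) (e1 : V) (K : V →ₗ[ℝ] V →ₗ[ℝ] V) (v1 v2 : V) : V :=
  K v1 v2 - (lam1 / 2 * ⟪v1, v2⟫) • e1

/-- The distribution `D₂ = {v : v ⟂ e₁, K(e₁,v) = (λ₁/2)v}`. -/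
def D2s (lam1 : ℝ) (e1 : V) (K : V →ₗ[ℝ] V →ₗ[ℝ] V) : Submodule ℝ V :=
  (ℝ ∙ e1)ᗮ ⊓ Module.End.eigenspace (K e1) (lam1 / 2)

/-- The distribution `D₃ = {w : w ⟂ e₁, K(e₁,w) = μw}`. -/
def D3s (mu : ℝ) (e1 : V) (K : V →ₗ[ℝ] V →ₗ[ℝ] V) : Submodule ℝ V :=
  (ℝ ∙ e1)ᗮ ⊓ Module.End.eigenspace (K e1) mu

/-- The operator `P_v(ṽ) = K(v, L(v,ṽ))`, as a linear endomorphism of `V`. -/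
def Pop (lam1 : ℝ) (e1 : V) (K : V →ₗ[ℝ] V →ₗ[ℝ] V) (v : V) : V →ₗ[ℝ] V :=
  (K v) ∘ₗ (K v - (lam1 / 2) •
    ((LinearMap.toSpanSingleton ℝ V e1) ∘ₗ (innerSL ℝ v).toLinearMap))

/-- The eigenspace `V_v(c)` of `P_v` within the orthogonal complement of `v` in `D₂`. -/
def Vvs (lam1 c : ℝ) (e1 : V) (K : V →ₗ[ℝ] V →ₗ[ℝ] V) (v : V) : Submodule ℝ V :=
  D2s lam1 e1 K ⊓ (ℝ ∙ v)ᗮ ⊓ Module.End.eigenspace (Pop lam1 e1 K v) c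

/-!
At a maximum `e₁` of the cubic form on the unit sphere the first-order condition gives
`K(e₁,e₁) = λ₁e₁`. With `ε = λ₁²/4 − η²` and `μ = λ₁/2 − η`, the operator `R(e₁,v)` acts on `D₂`
by `x ↦ −η²⟨v,x⟩e₁ + ηL(v,x)` and on `D₃` by `x ↦ −ηK(v,x)`. The parallelism identity at
`(e₁,v,v,v)` then gives `P_v v = (λ₁η/2)v`. For an eigenvector `w ⟂ v` of `P_v` with eigenvalue `c`,
the identity at `(e₁,v,v,w)` gives `K(L(v,v),w) = (λ₁η/2 − 2c)w`, and at `(v,w,v,v)` it gives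
`(c − τ)K(v,w) = 0`; if `K(v,w) = 0` then `cw = P_v w = 0`.
-/

variable {K : V →ₗ[ℝ] V →ₗ[ℝ] V}

theorem inner_apply_self_eq_zero_of_forall_le (hKsymm : ∀ X Y : V, K X Y = K Y X)
    (hKcub : ∀ X Y Z : V, ⟪K X Y, Z⟫ = ⟪K X Z, Y⟫) {e : V} (he : ‖e‖ = 1)
    (hmax : ∀ u : V, ‖u‖ = 1 → ⟪K u u, u⟫ ≤ ⟪K e e, e⟫) {x : V} (hx : ⟪e, x⟫ = 0)
    (hxn : ‖x‖ = 1) : ⟪K e e, x⟫ = 0 := by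
  set a := ⟪K e e, x⟫
  set b := ⟪K e x, x⟫
  set d := ⟪K x x, x⟫
  set g : ℝ → ℝ := fun t => ⟪K e e, e⟫ * Real.cos t ^ 3 + 3 * a * (Real.cos t ^ 2 * Real.sin t)
    + 3 * b * (Real.cos t * Real.sin t ^ 2) + d * Real.sin t ^ 3
  have hg : ∀ t, g t = ⟪K (Real.cos t • e + Real.sin t • x) (Real.cos t • e + Real.sin t • x),
      Real.cos t • e + Real.sin t • x⟫ := by
    intro t
    simp only [g, map_add, map_smul, LinearMap.add_apply, LinearMap.smul_apply, inner_add_left,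
      inner_add_right, real_inner_smul_left, real_inner_smul_right, hKsymm x e, hKcub e x e,
      hKcub x x e]
    ring
  have hunit : ∀ t, ‖Real.cos t • e + Real.sin t • x‖ = 1 := by
    intro t
    have hperp : ⟪Real.cos t • e, Real.sin t • x⟫ = 0 := by
      rw [real_inner_smul_left, real_inner_smul_right, hx, mul_zero, mul_zero]
    have := norm_add_sq_eq_norm_sq_add_norm_sq_real hperp
    rw [norm_smul, norm_smul, he, hxn, Real.norm_eq_abs, Real.norm_eq_abs, mul_one, mul_one,
      abs_mul_abs_self, abs_mul_abs_self] at this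
    nlinarith [norm_nonneg (Real.cos t • e + Real.sin t • x), Real.cos_sq_add_sin_sq t]
  have hloc : IsLocalMax g 0 :=
    Filter.Eventually.of_forall fun t => by
      simpa [hg] using hmax _ (hunit t)
  -- `g'(0) = 3a`, which vanishes at the maximum
  have hderiv := ((((((Real.hasDerivAt_cos 0).pow 3).const_mul ⟪K e e, e⟫).add
      ((((Real.hasDerivAt_cos 0).pow 2).mul (Real.hasDerivAt_sin 0)).const_mul (3 * a))).add
      (((Real.hasDerivAt_cos 0).mul ((Real.hasDerivAt_sin 0).pow 2)).const_mul (3 * b))).add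
      (((Real.hasDerivAt_sin 0).pow 3).const_mul d))
  simpa using hloc.hasDerivAt_eq_zero hderiv

theorem apply_self_eq_smul_of_forall_le (hKsymm : ∀ X Y : V, K X Y = K Y X)
    (hKcub : ∀ X Y Z : V, ⟪K X Y, Z⟫ = ⟪K X Z, Y⟫) {e : V} (he : ‖e‖ = 1)
    (hmax : ∀ u : V, ‖u‖ = 1 → ⟪K u u, u⟫ ≤ ⟪K e e, e⟫) : K e e = ⟪K e e, e⟫ • e := by
  have horth : ∀ x : V, ⟪e, x⟫ = 0 → ⟪K e e, x⟫ = 0 := by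
    intro x hx
    rcases eq_or_ne x 0 with rfl | hx0
    · exact inner_zero_right _
    have := inner_apply_self_eq_zero_of_forall_le hKsymm hKcub he hmax
      (x := ‖x‖⁻¹ • x) (by rw [real_inner_smul_right, hx, mul_zero]) (norm_smul_inv_norm hx0)
    rwa [real_inner_smul_right, mul_eq_zero, or_iff_right (inv_ne_zero (norm_ne_zero_iff.mpr hx0))]
      at this
  set d := K e e - ⟪K e e, e⟫ • e
  have hed : ⟪e, d⟫ = 0 := by
    rw [inner_sub_right, real_inner_smul_right, real_inner_self_eq_norm_sq, he, real_inner_comm]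
    ring
  have hdd : ⟪d, d⟫ = 0 := by
    rw [inner_sub_left, horth d hed, real_inner_smul_left, hed, mul_zero, sub_zero]
  exact sub_eq_zero.mp (inner_self_eq_zero.mp hdd)

variable {lam1 η μ : ℝ} {e1 : V}

theorem mem_D2s_iff {x : V} :
    x ∈ D2s lam1 e1 K ↔ ⟪e1, x⟫ = 0 ∧ K e1 x = (lam1 / 2) • x := by
  simp only [D2s, mem_inf, mem_orthogonal_singleton_iff_inner_right,
    Module.End.mem_eigenspace_iff]

theorem mem_D3s_iff {x : V} : x ∈ D3s μ e1 K ↔ ⟪e1, x⟫ = 0 ∧ K e1 x = μ • x := by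
  simp only [D3s, mem_inf, mem_orthogonal_singleton_iff_inner_right,
    Module.End.mem_eigenspace_iff]

theorem inner_eq_zero_of_mem_D2s_of_mem_D3s (hKcub : ∀ X Y Z : V, ⟪K X Y, Z⟫ = ⟪K X Z, Y⟫)
    (hne : lam1 / 2 ≠ μ) {x y : V} (hx : x ∈ D2s lam1 e1 K) (hy : y ∈ D3s μ e1 K) :
    ⟪x, y⟫ = 0 :=
  have hsymm : (K e1).IsSymmetric := fun x y => by rw [hKcub, real_inner_comm]
  (hsymm.orthogonalFamily_eigenspaces.isOrtho hne).inner_eq hx.2 hy.2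

theorem K_eq_smul_add_Lop (x y : V) : K x y = (lam1 / 2 * ⟪x, y⟫) • e1 + Lop lam1 e1 K x y := by
  rw [Lop, add_sub_cancel]

theorem Lop_eq_of_inner_eq_zero {x y : V} (h : ⟪x, y⟫ = 0) : Lop lam1 e1 K x y = K x y := by
  rw [Lop, h, mul_zero, zero_smul, sub_zero]

theorem Rc_add (ε : ℝ) (X Y Z W : V) : Rc ε K X Y (Z + W) = Rc ε K X Y Z + Rc ε K X Y W := by
  simp only [Rc, map_add, inner_add_right, add_smul]
  module

theorem Rc_smul (ε a : ℝ) (X Y Z : V) : Rc ε K X Y (a • Z) = a • Rc ε K X Y Z := by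
  simp only [Rc, map_smul, real_inner_smul_right, mul_smul]
  module

theorem Rc_e1_apply_e1 (hKsymm : ∀ X Y : V, K X Y = K Y X) (he1 : ⟪e1, e1⟫ = 1)
    (hK11 : K e1 e1 = lam1 • e1) {v : V} (hv : v ∈ D2s lam1 e1 K) :
    Rc (lam1 ^ 2 / 4 - η ^ 2) K e1 v e1 = η ^ 2 • v := by
  obtain ⟨hv1, hK1v⟩ := mem_D2s_iff.mp hv
  simp only [Rc, hKsymm v e1, hK1v, hK11, map_smul, he1, real_inner_comm e1 v, hv1]
  module

theorem Rc_e1_apply_of_mem_D2s (hK11 : K e1 e1 = lam1 • e1) {v x : V}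
    (hx : x ∈ D2s lam1 e1 K) (hL : Lop lam1 e1 K v x ∈ D3s (lam1 / 2 - η) e1 K) :
    Rc (lam1 ^ 2 / 4 - η ^ 2) K e1 v x =
      (-η ^ 2 * ⟪v, x⟫) • e1 + η • Lop lam1 e1 K v x := by
  obtain ⟨hx1, hK1x⟩ := mem_D2s_iff.mp hx
  obtain ⟨-, hK1L⟩ := mem_D3s_iff.mp hL
  simp only [Rc, hx1, hK1x, map_smul, K_eq_smul_add_Lop (lam1 := lam1) (e1 := e1) v x, map_add,
    hK11, hK1L]
  module

theorem Rc_e1_apply_of_mem_D3s {v x : V} (hx : x ∈ D3s (lam1 / 2 - η) e1 K) (hvx : ⟪v, x⟫ = 0)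
    (hKvx : K v x ∈ D2s lam1 e1 K) :
    Rc (lam1 ^ 2 / 4 - η ^ 2) K e1 v x = -η • K v x := by
  obtain ⟨hx1, hK1x⟩ := mem_D3s_iff.mp hx
  simp only [Rc, hx1, hvx, hK1x, (mem_D2s_iff.mp hKvx).2, map_smul]
  module

theorem Rc_apply_e1_of_mem_D2s (hKsymm : ∀ X Y : V, K X Y = K Y X) (ε : ℝ) {v w : V}
    (hv : v ∈ D2s lam1 e1 K) (hw : w ∈ D2s lam1 e1 K) : Rc ε K v w e1 = 0 := by
  obtain ⟨hv1, hK1v⟩ := mem_D2s_iff.mp hv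
  obtain ⟨hw1, hK1w⟩ := mem_D2s_iff.mp hw
  simp only [Rc, real_inner_comm e1, hv1, hw1, hKsymm _ e1, hK1v, hK1w, map_smul, hKsymm v w]
  module

theorem K_apply_Lop_self (hKsymm : ∀ X Y : V, K X Y = K Y X) (he1 : ⟪e1, e1⟫ = 1)
    (hK11 : K e1 e1 = lam1 • e1) (hη : η ≠ 0) {v : V} (hv : v ∈ D2s lam1 e1 K) (hvv : ⟪v, v⟫ = 1)
    (hL : Lop lam1 e1 K v v ∈ D3s (lam1 / 2 - η) e1 K) (hvL : ⟪v, Lop lam1 e1 K v v⟫ = 0)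
    (hKL : K v (Lop lam1 e1 K v v) ∈ D2s lam1 e1 K)
    (hpar : Rc (lam1 ^ 2 / 4 - η ^ 2) K e1 v (K v v) =
      K (Rc (lam1 ^ 2 / 4 - η ^ 2) K e1 v v) v + K v (Rc (lam1 ^ 2 / 4 - η ^ 2) K e1 v v)) :
    K v (Lop lam1 e1 K v v) = (lam1 * η / 2) • v := by
  have hKvv : K v v = (lam1 / 2) • e1 + Lop lam1 e1 K v v := by
    rw [K_eq_smul_add_Lop, hvv, mul_one]
  have hRvv : Rc (lam1 ^ 2 / 4 - η ^ 2) K e1 v v = (-η ^ 2) • e1 + η • Lop lam1 e1 K v v := by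
    rw [Rc_e1_apply_of_mem_D2s hK11 hv hL, hvv, mul_one]
  rw [hKvv, Rc_add, Rc_smul, Rc_e1_apply_e1 hKsymm he1 hK11 hv, Rc_e1_apply_of_mem_D3s hL hvL hKL,
    hKsymm _ v, hRvv, map_add, map_smul, map_smul, hKsymm v e1, (mem_D2s_iff.mp hv).2] at hpar
  have : η • (K v (Lop lam1 e1 K v v) - (lam1 * η / 2) • v) = 0 := by
    linear_combination (norm := module) (-1 / 3 : ℝ) • hpar
  exact sub_eq_zero.mp ((smul_eq_zero.mp this).resolve_left hη)

theorem K_Lop_self_apply_of_eigen (hK11 : K e1 e1 = lam1 • e1) (hη : η ≠ 0) {v w : V} {c : ℝ}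
    (hv : v ∈ D2s lam1 e1 K) (hvv : ⟪v, v⟫ = 1) (hw : w ∈ D2s lam1 e1 K) (hvw : ⟪v, w⟫ = 0)
    (hL : Lop lam1 e1 K v v ∈ D3s (lam1 / 2 - η) e1 K) (hu : K v w ∈ D3s (lam1 / 2 - η) e1 K)
    (hvu : ⟪v, K v w⟫ = 0) (hc : K v (K v w) = c • w)
    (hpar : Rc (lam1 ^ 2 / 4 - η ^ 2) K e1 v (K v w) =
      K (Rc (lam1 ^ 2 / 4 - η ^ 2) K e1 v v) w + K v (Rc (lam1 ^ 2 / 4 - η ^ 2) K e1 v w)) :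
    K (Lop lam1 e1 K v v) w = (lam1 * η / 2 - 2 * c) • w := by
  have hLvw := Lop_eq_of_inner_eq_zero (lam1 := lam1) (e1 := e1) (K := K) hvw
  rw [Rc_e1_apply_of_mem_D3s hu hvu (hc ▸ smul_mem _ c hw),
    Rc_e1_apply_of_mem_D2s hK11 hv hL, hvv, mul_one,
    Rc_e1_apply_of_mem_D2s hK11 hw (hLvw ▸ hu), hvw, hLvw, hc, map_add, map_smul, map_smul,
    LinearMap.add_apply, LinearMap.smul_apply, LinearMap.smul_apply, (mem_D2s_iff.mp hw).2,
    mul_zero, zero_smul, zero_add, map_smul, hc] at hpar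
  have : η • (K (Lop lam1 e1 K v v) w - (lam1 * η / 2 - 2 * c) • w) = 0 := by
    linear_combination (norm := module) -hpar
  exact sub_eq_zero.mp ((smul_eq_zero.mp this).resolve_left hη)

theorem smul_K_apply_eq_zero_of_eigen (hKsymm : ∀ X Y : V, K X Y = K Y X) {v w : V} {c : ℝ}
    (hv : v ∈ D2s lam1 e1 K) (hvv : ⟪v, v⟫ = 1) (hw : w ∈ D2s lam1 e1 K) (hvw : ⟪v, w⟫ = 0)
    (hvL : ⟪v, Lop lam1 e1 K v v⟫ = 0) (hwL : ⟪w, Lop lam1 e1 K v v⟫ = 0)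
    (hA : K v (Lop lam1 e1 K v v) = (lam1 * η / 2) • v)
    (hB : K (Lop lam1 e1 K v v) w = (lam1 * η / 2 - 2 * c) • w) (hc : K v (K v w) = c • w)
    (hpar : Rc (lam1 ^ 2 / 4 - η ^ 2) K v w (K v v) =
      K (Rc (lam1 ^ 2 / 4 - η ^ 2) K v w v) v + K v (Rc (lam1 ^ 2 / 4 - η ^ 2) K v w v)) :
    (c - η * (η + lam1 / 2) / 4) • K v w = 0 := by
  have hKvv : K v v = (lam1 / 2) • e1 + Lop lam1 e1 K v v := by
    rw [K_eq_smul_add_Lop, hvv, mul_one]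
  have hRvL : Rc (lam1 ^ 2 / 4 - η ^ 2) K v w (Lop lam1 e1 K v v) = (2 * c) • K v w := by
    simp only [Rc, hwL, hvL, hKsymm w (Lop _ _ _ _ _), hB, hA, map_smul, hKsymm w v]
    module
  have hRvv : Rc (lam1 ^ 2 / 4 - η ^ 2) K v w v = (η ^ 2 + lam1 * η / 2 - 3 * c) • w := by
    simp only [Rc, real_inner_comm v w, hvw, hvv, hKsymm w v, hc, hKvv, map_add, map_smul,
      hKsymm w e1, (mem_D2s_iff.mp hw).2, hKsymm w (Lop _ _ _ _ _), hB]
    module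
  rw [hKvv, Rc_add, Rc_smul, Rc_apply_e1_of_mem_D2s hKsymm _ hv hw, hRvL, hRvv, map_smul,
    map_smul, LinearMap.smul_apply, hKsymm w v] at hpar
  linear_combination (norm := module) (1 / 8 : ℝ) • hpar

theorem eq_zero_or_eq_of_apply_apply_eq_smul {T : V →ₗ[ℝ] V} {w : V} {c t : ℝ} (hw : w ≠ 0)
    (hc : T (T w) = c • w) (ht : (c - t) • T w = 0) : c = 0 ∨ c = t := by
  rcases smul_eq_zero.mp ht with h | h
  · exact Or.inr (sub_eq_zero.mp h)
  · have : c • w = 0 := by rw [← hc, h, map_zero]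
    exact Or.inl ((smul_eq_zero.mp this).resolve_right hw)

theorem stmt_10_general {V : Type*} [NormedAddCommGroup V] [InnerProductSpace ℝ V]
    (ε : ℝ)
    (K : V →ₗ[ℝ] V →ₗ[ℝ] V)
    (hKsymm : ∀ X Y : V, K X Y = K Y X)
    (hKcub : ∀ X Y Z : V, ⟪K X Y, Z⟫ = ⟪K X Z, Y⟫)
    (hpar : ∀ X Y Z U : V,
      Rc ε K X Y (K Z U) = K (Rc ε K X Y Z) U + K Z (Rc ε K X Y U))
    (e1 : V) (he1 : ‖e1‖ = 1)
    (lam1 η μ τ : ℝ)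
    (hlam1 : lam1 = ⟪K e1 e1, e1⟫)
    (hmax : ∀ u : V, ‖u‖ = 1 → ⟪K u u, u⟫ ≤ lam1)
    (hdisc : 0 < lam1 ^ 2 - 4 * ε)
    (hη : η = Real.sqrt (lam1 ^ 2 - 4 * ε) / 2)
    (hμ : μ = (lam1 - Real.sqrt (lam1 ^ 2 - 4 * ε)) / 2)
    (hτ : τ = η * (η + lam1 / 2) / 4)
    (hLD3 : ∀ v1 ∈ D2s lam1 e1 K, ∀ v2 ∈ D2s lam1 e1 K,
      Lop lam1 e1 K v1 v2 ∈ D3s μ e1 K)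
    (hKD2 : ∀ v ∈ D2s lam1 e1 K, ∀ w ∈ D3s μ e1 K, K v w ∈ D2s lam1 e1 K)
    (v : V) (hv : v ∈ D2s lam1 e1 K) (hvu : ‖v‖ = 1) :
    K v (Lop lam1 e1 K v v) = (lam1 * η / 2) • v ∧
    (∀ (c : ℝ) (w : V), w ∈ D2s lam1 e1 K → ⟪v, w⟫ = 0 → w ≠ 0 →
      K v (Lop lam1 e1 K v w) = c • w → c = 0 ∨ c = τ) := by
  have hK11 := apply_self_eq_smul_of_forall_le hKsymm hKcub he1 (hlam1 ▸ hmax)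
  rw [← hlam1] at hK11
  have hη0 : η ≠ 0 := by rw [hη]; exact (half_pos (Real.sqrt_pos.mpr hdisc)).ne'
  obtain rfl : μ = lam1 / 2 - η := by rw [hμ, hη]; ring
  obtain rfl : ε = lam1 ^ 2 / 4 - η ^ 2 := by rw [hη, div_pow, Real.sq_sqrt hdisc.le]; ring
  have he1i : ⟪e1, e1⟫ = 1 := by rw [real_inner_self_eq_norm_sq, he1, one_pow]
  have hvv : ⟪v, v⟫ = 1 := by rw [real_inner_self_eq_norm_sq, hvu, one_pow]
  have horth {x y : V} (hx : x ∈ D2s lam1 e1 K) (hy : y ∈ D3s (lam1 / 2 - η) e1 K) : ⟪x, y⟫ = 0 :=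
    inner_eq_zero_of_mem_D2s_of_mem_D3s hKcub (Ne.symm (mt sub_eq_self.mp hη0)) hx hy
  have hL := hLD3 v hv v hv
  have hA := K_apply_Lop_self hKsymm he1i hK11 hη0 hv hvv hL (horth hv hL) (hKD2 v hv _ hL)
    (hpar e1 v v v)
  refine ⟨hA, fun c w hw hvw hw0 hc => ?_⟩
  rw [Lop_eq_of_inner_eq_zero hvw] at hc
  have hu : K v w ∈ D3s (lam1 / 2 - η) e1 K := Lop_eq_of_inner_eq_zero hvw ▸ hLD3 v hv w hw
  have hB := K_Lop_self_apply_of_eigen hK11 hη0 hv hvv hw hvw hL hu (horth hv hu) hc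
    (hpar e1 v v w)
  exact eq_zero_or_eq_of_apply_apply_eq_smul hw0 hc (hτ ▸ smul_K_apply_eq_zero_of_eigen hKsymm hv
    hvv hw hvw (horth hv hL) (horth hw hL) hA hB hc (hpar v w v v))

/-- Lemma 4.8: for a unit vector `v ∈ D₂`, `P_v v = (λ₁η/2)v`, and on the orthogonal
complement of `v` in `D₂` the only possible eigenvalues of `P_v` are `0` and `τ`. -/
theorem stmt_10 {V : Type*} [NormedAddCommGroup V] [InnerProductSpace ℝ V]
    (n m : ℕ) (hn : finrank ℝ V = n) (hn2 : 2 ≤ n)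
    (ε : ℝ) (hε : ε = 1 ∨ ε = -1)
    (K : V →ₗ[ℝ] V →ₗ[ℝ] V)
    (hKsymm : ∀ X Y : V, K X Y = K Y X)
    (hKcub : ∀ X Y Z : V, ⟪K X Y, Z⟫ = ⟪K X Z, Y⟫)
    (hpar : ∀ X Y Z U : V,
      Rc ε K X Y (K Z U) = K (Rc ε K X Y Z) U + K Z (Rc ε K X Y U))
    (e1 : V) (he1 : ‖e1‖ = 1)
    (lam1 η μ τ : ℝ)
    (hlam1 : lam1 = ⟪K e1 e1, e1⟫) (hlam1pos : 0 < lam1)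
    (hmax : ∀ u : V, ‖u‖ = 1 → ⟪K u u, u⟫ ≤ lam1)
    (hdisc : 0 < lam1 ^ 2 - 4 * ε)
    (hη : η = Real.sqrt (lam1 ^ 2 - 4 * ε) / 2)
    (hμ : μ = (lam1 - Real.sqrt (lam1 ^ 2 - 4 * ε)) / 2)
    (hτ : τ = η * (η + lam1 / 2) / 4)
    (hm2 : 2 ≤ m) (hmn : m ≤ n - 1)
    (hdimD2 : finrank ℝ (D2s lam1 e1 K) = m - 1)
    (hsplit : (ℝ ∙ e1) ⊔ D2s lam1 e1 K ⊔ D3s μ e1 K = ⊤)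
    (hLD3 : ∀ v1 ∈ D2s lam1 e1 K, ∀ v2 ∈ D2s lam1 e1 K,
      Lop lam1 e1 K v1 v2 ∈ D3s μ e1 K)
    (hKD2 : ∀ v ∈ D2s lam1 e1 K, ∀ w ∈ D3s μ e1 K, K v w ∈ D2s lam1 e1 K)
    (v : V) (hv : v ∈ D2s lam1 e1 K) (hvu : ‖v‖ = 1) :
    K v (Lop lam1 e1 K v v) = (lam1 * η / 2) • v ∧
    (∀ (c : ℝ) (w : V), w ∈ D2s lam1 e1 K → ⟪v, w⟫ = 0 → w ≠ 0 →
      K v (Lop lam1 e1 K v w) = c • w → c = 0 ∨ c = τ) :=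
  stmt_10_general ε K hKsymm hKcub hpar e1 he1 lam1 η μ τ hlam1 hmax hdisc hη hμ hτ hLD3 hKD2 v hv
    hvu

end
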